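/- Let Ω be a domain in a metric space X, z₀ ∈ Ω, c ≥ 1, and let γ: [0,L] → Ω̄ be a curve, parametrized by arclength with γ(L) = z₀, satisfying ℓ(γ restricted to [0,s]) ≤ c · dist(γ(s), X∖Ω) for all s ∈ (0,L] (a c-John curve with respect to Ω ending at z₀). Define the 'carrot' C[γ] = ⋃_{s∈(0,L]} B(γ(s), dist(γ(s), X∖Ω)). Assume X is geodesic. Then C[γ] is an (8M+1)-John domain with John center z₀ whenever c ≤ 4M; in particular, if c = 4M, then C[γ] is (8M+1)-John with center z₀. -/

import Mathlib

/-!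
For `y ∈ B(γ s₀, dist(γ s₀, X∖Ω))`, run along a geodesic from `y` to `γ s₀` and then along
`γ` to `z₀`. On the geodesic, the distance to the complement of the carrot is at least
`dist(γ s₀, X∖Ω) - dist(·, γ s₀)`, which exceeds the length travelled. At a point `γ s` the
ball `B(γ s, dist(γ s, X∖Ω))` lies in the carrot, and since `dist(·, X∖Ω)` is 1-Lipschitz
the length travelled, `dist(y, γ s₀) + (s - s₀)`, is below
`dist(γ s, X∖Ω) + 2s ≤ (2c + 1) dist(γ s, X∖Ω)`.
-/

open Metric
open scoped ENNReal

/-- `X` is a geodesic space. -/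
def GeodesicSpace' (X : Type*) [MetricSpace X] : Prop :=
  ∀ x y : X, ∃ γ : ℝ → X, γ 0 = x ∧ γ (dist x y) = y ∧
    ∀ s ∈ Set.Icc (0 : ℝ) (dist x y), ∀ t ∈ Set.Icc (0 : ℝ) (dist x y),
      dist (γ s) (γ t) = |s - t|

/-- `U` is a `c`-John domain with John center `z₀`. -/
def IsJohnDomain {X : Type*} [MetricSpace X] (U : Set X) (c : ℝ) (z₀ : X) : Prop :=
  ∀ y ∈ U, y ≠ z₀ → ∃ (L : ℝ) (γ : ℝ → X), 0 ≤ L ∧ γ 0 = y ∧ γ L = z₀ ∧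
    LipschitzOnWith 1 γ (Set.Icc 0 L) ∧
    ∀ s ∈ Set.Icc (0 : ℝ) L,
      γ s ∈ U ∧ ENNReal.ofReal s ≤ ENNReal.ofReal c * EMetric.infEdist (γ s) Uᶜ

theorem LipschitzOnWith.congr {α β : Type*} [PseudoEMetricSpace α] [PseudoEMetricSpace β]
    {f g : α → β} {K : NNReal} {s : Set α} (hf : LipschitzOnWith K f s) (h : Set.EqOn f g s) :
    LipschitzOnWith K g s := fun x hx y hy => by
  rw [← h hx, ← h hy]
  exact hf hx hy

theorem LipschitzOnWith.comp_add_const_Icc {α : Type*} [PseudoMetricSpace α] {f : ℝ → α}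
    {K : NNReal} {a b : ℝ} (hf : LipschitzOnWith K f (Set.Icc a b)) (e : ℝ) :
    LipschitzOnWith K (fun t => f (t + e)) (Set.Icc (a - e) (b - e)) :=
  LipschitzOnWith.of_dist_le_mul fun u hu v hv => by
    rw [← dist_add_right u v e]
    exact hf.dist_le_mul _ ⟨by linarith [hu.1], by linarith [hu.2]⟩ _
      ⟨by linarith [hv.1], by linarith [hv.2]⟩

theorem LipschitzOnWith.Icc_union_Icc {α : Type*} [PseudoMetricSpace α] {f : ℝ → α}
    {K : NNReal} {a b c : ℝ} (h₁ : LipschitzOnWith K f (Set.Icc a b))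
    (h₂ : LipschitzOnWith K f (Set.Icc b c)) : LipschitzOnWith K f (Set.Icc a c) := by
  have across : ∀ x ∈ Set.Icc a b, ∀ y ∈ Set.Icc b c, dist (f x) (f y) ≤ K * dist x y := by
    intro x hx y hy
    calc dist (f x) (f y) ≤ dist (f x) (f b) + dist (f b) (f y) := dist_triangle _ _ _
      _ ≤ K * dist x b + K * dist b y :=
        add_le_add (h₁.dist_le_mul x hx b ⟨hx.1.trans hx.2, le_rfl⟩)
          (h₂.dist_le_mul b ⟨le_rfl, hy.1.trans hy.2⟩ y hy)
      _ = K * dist x y := by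
        simp only [Real.dist_eq, abs_of_nonpos (sub_nonpos.2 hx.2),
          abs_of_nonpos (sub_nonpos.2 hy.1), abs_of_nonpos (sub_nonpos.2 (hx.2.trans hy.1))]
        ring
  refine LipschitzOnWith.of_dist_le_mul fun x hx y hy => ?_
  rcases le_total x b with hxb | hbx <;> rcases le_total y b with hyb | hby
  · exact h₁.dist_le_mul x ⟨hx.1, hxb⟩ y ⟨hy.1, hyb⟩
  · exact across x ⟨hx.1, hxb⟩ y ⟨hby, hy.2⟩
  · rw [dist_comm, dist_comm x]
    exact across y ⟨hy.1, hyb⟩ x ⟨hbx, hx.2⟩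
  · exact h₂.dist_le_mul x ⟨hbx, hx.2⟩ y ⟨hby, hy.2⟩

theorem ofReal_le_infEDist_compl_of_ball_subset {X : Type*} [MetricSpace X] {U : Set X}
    {x : X} {r : ℝ} (h : ball x r ⊆ U) : ENNReal.ofReal r ≤ infEDist x Uᶜ := by
  refine le_infEDist.2 fun w hw => ?_
  rw [edist_dist]
  exact ENNReal.ofReal_le_ofReal (not_lt.1 fun hlt => hw (h (mem_ball'.2 hlt)))

theorem IsJohnDomain.mono {X : Type*} [MetricSpace X] {U : Set X} {c c' : ℝ} {z₀ : X}
    (h : IsJohnDomain U c z₀) (hc : c ≤ c') : IsJohnDomain U c' z₀ := by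
  intro y hy hne
  obtain ⟨L, γ, hL, hγ0, hγL, hγ, hJohn⟩ := h y hy hne
  refine ⟨L, γ, hL, hγ0, hγL, hγ, fun s hs => ⟨(hJohn s hs).1, ?_⟩⟩
  exact (hJohn s hs).2.trans (mul_le_mul_left (ENNReal.ofReal_le_ofReal hc) _)

theorem mem_and_ofReal_le_mul_infEDist_compl_of_ball_subset {X : Type*} [MetricSpace X]
    {U : Set X} {x : X} {r k t : ℝ} (hU : ball x r ⊆ U) (hr : 0 < r) (hk : 0 ≤ k)
    (ht : t ≤ k * r) :
    x ∈ U ∧ ENNReal.ofReal t ≤ ENNReal.ofReal k * infEDist x Uᶜ :=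
  ⟨hU (mem_ball_self hr), calc
    ENNReal.ofReal t ≤ ENNReal.ofReal (k * r) := ENNReal.ofReal_le_ofReal ht
    _ = ENNReal.ofReal k * ENNReal.ofReal r := ENNReal.ofReal_mul hk
    _ ≤ ENNReal.ofReal k * infEDist x Uᶜ :=
      mul_le_mul_right (ofReal_le_infEDist_compl_of_ball_subset hU) _⟩

section Carrot

variable {X : Type*} [MetricSpace X] {Ω : Set X} {γ : ℝ → X} {c L : ℝ}

def carrot (Ω : Set X) (γ : ℝ → X) (L : ℝ) : Set X :=
  ⋃ s ∈ Set.Ioc (0 : ℝ) L, ball (γ s) (infDist (γ s) Ωᶜ)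

theorem ball_subset_carrot {s : ℝ} (hs : s ∈ Set.Ioc 0 L) :
    ball (γ s) (infDist (γ s) Ωᶜ) ⊆ carrot Ω γ L :=
  Set.subset_biUnion_of_mem (u := fun s => ball (γ s) (infDist (γ s) Ωᶜ)) hs

theorem dist_add_sub_le_mul_infDist (harc : LipschitzOnWith 1 γ (Set.Icc 0 L))
    (hJohn : ∀ s ∈ Set.Ioc (0 : ℝ) L, s ≤ c * infDist (γ s) Ωᶜ) {y : X} {s₀ s : ℝ}
    (hs₀ : s₀ ∈ Set.Ioc 0 L) (hs : s ∈ Set.Icc s₀ L)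
    (hy : dist y (γ s₀) < infDist (γ s₀) Ωᶜ) :
    dist y (γ s₀) + (s - s₀) ≤ (2 * c + 1) * infDist (γ s) Ωᶜ := by
  have hγ : dist (γ s₀) (γ s) ≤ s - s₀ := by
    simpa [Real.dist_eq, abs_of_nonpos (sub_nonpos.2 hs.1), abs_sub_comm] using
      harc.dist_le_mul s₀ ⟨hs₀.1.le, hs₀.2⟩ s ⟨hs₀.1.le.trans hs.1, hs.2⟩
  have hinf : infDist (γ s₀) Ωᶜ ≤ infDist (γ s) Ωᶜ + dist (γ s₀) (γ s) :=
    infDist_le_infDist_add_dist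
  have hs_john : s ≤ c * infDist (γ s) Ωᶜ := hJohn s ⟨hs₀.1.trans_le hs.1, hs.2⟩
  linarith [hs₀.1]

theorem isJohnDomain_carrot (hgeo : GeodesicSpace' X)
    (harc : LipschitzOnWith 1 γ (Set.Icc 0 L))
    (hJohn : ∀ s ∈ Set.Ioc (0 : ℝ) L, s ≤ c * infDist (γ s) Ωᶜ) (hc : 0 ≤ c) :
    IsJohnDomain (carrot Ω γ L) (2 * c + 1) (γ L) := by
  intro y hy _
  obtain ⟨s₀, hs₀, hy⟩ := Set.mem_iUnion₂.1 hy
  rw [mem_ball] at hy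
  obtain ⟨g, hg0, hgd, hg⟩ := hgeo y (γ s₀)
  set d := dist y (γ s₀)
  have hd : 0 ≤ d := dist_nonneg
  have hg_dist : ∀ t ∈ Set.Icc 0 d, dist (g t) (γ s₀) = d - t := fun t ht => by
    rw [← hgd, hg t ht d ⟨hd, le_rfl⟩, abs_of_nonpos (by linarith [ht.2])]
    ring
  set α : ℝ → X := fun t => if t ≤ d then g t else γ (t + (s₀ - d))
  have hα_head : Set.EqOn α g (Set.Icc 0 d) := fun t ht => if_pos ht.2
  have hα_tail : Set.EqOn α (fun t => γ (t + (s₀ - d))) (Set.Icc d (d + (L - s₀))) := by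
    intro t ht
    rcases ht.1.eq_or_lt with rfl | hdt
    · simp [α, hgd]
    · exact if_neg (not_le.2 hdt)
  refine ⟨d + (L - s₀), α, by linarith [hs₀.2], by simp [α, hd, hg0], ?_, ?_, ?_⟩
  · rw [hα_tail ⟨by linarith [hs₀.2], le_rfl⟩]
    ring_nf
  · have hg_lip : LipschitzOnWith 1 g (Set.Icc 0 d) :=
      .of_dist_le_mul fun u hu v hv => by simp [hg u hu v hv, Real.dist_eq]
    have hγ_lip := (harc.comp_add_const_Icc (s₀ - d)).mono
      (Set.Icc_subset_Icc (by linarith [hs₀.1]) (by linarith) :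
        Set.Icc d (d + (L - s₀)) ⊆ Set.Icc (0 - (s₀ - d)) (L - (s₀ - d)))
    exact (hg_lip.congr hα_head.symm).Icc_union_Icc (hγ_lip.congr hα_tail.symm)
  · intro t ht
    rcases le_or_gt t d with htd | hdt
    · rw [hα_head ⟨ht.1, htd⟩]
      refine mem_and_ofReal_le_mul_infEDist_compl_of_ball_subset
        (r := infDist (γ s₀) Ωᶜ - (d - t))
        ((ball_subset_ball' ?_).trans (ball_subset_carrot hs₀)) (by linarith [ht.1])
        (by linarith) (by nlinarith [ht.1])
      rw [hg_dist t ⟨ht.1, htd⟩]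
      linarith
    · rw [hα_tail ⟨hdt.le, ht.2⟩]
      have hs : t + (s₀ - d) ∈ Set.Ioc 0 L := ⟨by linarith [hs₀.1], by linarith [ht.2]⟩
      have hbound := dist_add_sub_le_mul_infDist harc hJohn hs₀ ⟨by linarith, hs.2⟩ hy
      have hρ : 0 < infDist (γ (t + (s₀ - d))) Ωᶜ := by
        nlinarith [hJohn _ hs, hs.1, infDist_nonneg (x := γ (t + (s₀ - d))) (s := Ωᶜ)]
      exact mem_and_ofReal_le_mul_infEDist_compl_of_ball_subset (ball_subset_carrot hs) hρ
        (by linarith) (by linarith)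

end Carrot

theorem carrot_isJohnDomain_general {X : Type*} [MetricSpace X] (hgeo : GeodesicSpace' X)
    (Ω : Set X) (z₀ : X)
    (c L : ℝ) (hc : 1 ≤ c)
    (γ : ℝ → X) (hγL : γ L = z₀)
    (harc : LipschitzOnWith 1 γ (Set.Icc 0 L))
    (hJohn : ∀ s ∈ Set.Ioc (0 : ℝ) L, s ≤ c * Metric.infDist (γ s) Ωᶜ) :
    ∀ M : ℝ, 0 < M → c ≤ 4 * M →
      IsJohnDomain (⋃ s ∈ Set.Ioc (0 : ℝ) L,
        Metric.ball (γ s) (Metric.infDist (γ s) Ωᶜ)) (8 * M + 1) z₀ := by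
  intro M _ hcM
  subst hγL
  exact (isJohnDomain_carrot hgeo harc hJohn (by linarith)).mono (by linarith)

/-- The "carrot" `C[γ] = ⋃_{s ∈ (0,L]} B(γ s, dist(γ s, X∖Ω))` over a `c`-John curve `γ`
(parametrized by arclength, ending at `z₀ ∈ Ω`, with values in `Ω̄`) is an `(8M+1)`-John
domain with John center `z₀`, whenever `c ≤ 4M`. -/
theorem carrot_isJohnDomain {X : Type*} [MetricSpace X] (hgeo : GeodesicSpace' X)
    (Ω : Set X) (hΩo : IsOpen Ω) (hΩc : IsConnected Ω) (z₀ : X) (hz₀ : z₀ ∈ Ω)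
    (c L : ℝ) (hc : 1 ≤ c) (hL : 0 ≤ L)
    (γ : ℝ → X) (hγL : γ L = z₀)
    (harc : LipschitzOnWith 1 γ (Set.Icc 0 L))
    (hγcl : ∀ s ∈ Set.Icc (0 : ℝ) L, γ s ∈ closure Ω)
    (hJohn : ∀ s ∈ Set.Ioc (0 : ℝ) L, s ≤ c * Metric.infDist (γ s) Ωᶜ) :
    ∀ M : ℝ, 0 < M → c ≤ 4 * M →
      IsJohnDomain (⋃ s ∈ Set.Ioc (0 : ℝ) L,
        Metric.ball (γ s) (Metric.infDist (γ s) Ωᶜ)) (8 * M + 1) z₀ :=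
  carrot_isJohnDomain_general hgeo Ω z₀ c L hc γ hγL harc hJohn
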